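/- arXiv:2206.03299 — 3 statements merged into one kernel-verified Lean document; each statement's English description precedes it below -/
import Mathlib

section
/- Let Θ: [0,∞) → ℝ^q solve the gradient flow dΘ/dt = −∇L_n(Θ(t)) for L_n(Θ) = (1/(2n)) Σ_{i=1}^n (f(x_i;Θ) − y_i)², where f is differentiable and satisfies the per-block Euler identity ⟨Θ^(l), ∂f/∂Θ^(l)⟩ = f. Assume |y_i| ≤ C_y for all i. Then for each block l, d/dt ‖Θ^(l)(t)‖₂² ≤ 2√(2L_n(Θ(t))) · (C_y − √(2L_n(Θ(t)))). -/
/-!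
Along the flow, `d/dt ‖Θ^(l)‖² = -2 ⟪Θ^(l), ∇_l L_n(Θ)⟫`. The `l`-th block of `∇L_n` is
`(1/n) Σ rᵢ ∇_l fᵢ` with residuals `rᵢ = fᵢ - yᵢ`, and the Euler identity turns
`⟪Θ^(l), ∇_l fᵢ⟫` into `fᵢ = rᵢ + yᵢ`. Hence the derivative is `-2ρ² - (2/n) Σ rᵢ yᵢ`, where
`ρ = √(2 L_n)` is the root mean square residual, and Cauchy–Schwarz with `|yᵢ| ≤ C_y` bounds
the last term by `2 ρ C_y`.
-/

open scoped RealInnerProductSpace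

theorem fderiv_const_mul_sum_sq_sub_apply {G : Type*} [NormedAddCommGroup G] [NormedSpace ℝ G]
    {ι : Type*} [Fintype ι] {f : ι → G → ℝ} {x : G} (hf : ∀ i, DifferentiableAt ℝ (f i) x)
    (y : ι → ℝ) (c : ℝ) (w : G) :
    fderiv ℝ (fun z => c * ∑ i, (f i z - y i) ^ 2) x w =
      c * ∑ i, 2 * (f i x - y i) * fderiv ℝ (f i) x w := by
  have h := (HasFDerivAt.fun_sum (u := Finset.univ) fun i _ =>
    ((hf i).hasFDerivAt.sub_const (y i)).pow 2).const_mul c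
  rw [h.fderiv]
  simp

namespace PiLp

variable {ι : Type*} [Fintype ι] [DecidableEq ι] {E : ι → Type*}
  [∀ i, NormedAddCommGroup (E i)] [∀ i, InnerProductSpace ℝ (E i)]

theorem inner_single_left (l : ι) (w : E l) (x : PiLp 2 E) :
    ⟪single 2 l w, x⟫ = ⟪w, x l⟫ := by
  rw [inner_apply, Finset.sum_eq_single l
    (fun m _ hm => by rw [single_eq_of_ne (p := 2) hm, inner_zero_left]) (by simp),
    single_eq_same]

theorem fderiv_comp_toLp_update_apply {g : PiLp 2 E → ℝ} {x : PiLp 2 E}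
    (hg : DifferentiableAt ℝ g x) (l : ι) (w : E l) :
    fderiv ℝ (fun v => g (WithLp.toLp 2 (Function.update x l v))) (x l) w =
      fderiv ℝ g x (single 2 l w) := by
  have hupdate := (hasFDerivAt_toLp (𝕜 := ℝ) 2 (Function.update x.ofLp l (x l))).comp (x l)
    (hasFDerivAt_update x.ofLp (x l))
  have hg' : DifferentiableAt ℝ g ((WithLp.toLp 2 ∘ Function.update x.ofLp l) (x l)) := by
    simpa using hg
  rw [HasFDerivAt.fderiv (f := fun v => g (WithLp.toLp 2 (Function.update x.ofLp l v)))
    (hg'.hasFDerivAt.comp (x l) hupdate)]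
  simp only [Function.comp_apply, Function.update_eq_self, WithLp.toLp_ofLp,
    ContinuousLinearMap.comp_apply]
  congr 1
  ext j : 1
  rcases eq_or_ne j l with rfl | hj
  · simp
  · simp [hj]

variable [∀ i, CompleteSpace (E i)]

theorem inner_gradient_apply (g : PiLp 2 E → ℝ) (x : PiLp 2 E) (l : ι) (w : E l) :
    ⟪w, gradient g x l⟫ = fderiv ℝ g x (single 2 l w) := by
  rw [← inner_single_left, inner_gradient_right]
  rfl

theorem gradient_comp_toLp_update {g : PiLp 2 E → ℝ} {x : PiLp 2 E}
    (hg : DifferentiableAt ℝ g x) (l : ι) :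
    gradient (fun v => g (WithLp.toLp 2 (Function.update x l v))) (x l) = gradient g x l :=
  ext_inner_left ℝ fun w => by
    rw [inner_gradient_right, inner_gradient_apply, fderiv_comp_toLp_update_apply hg]
    rfl

theorem inner_apply_gradient_const_mul_sum_sq_sub {κ : Type*} [Fintype κ]
    {f : κ → PiLp 2 E → ℝ} {x : PiLp 2 E} (hf : ∀ k, DifferentiableAt ℝ (f k) x) (l : ι)
    (heuler : ∀ k, ⟪x l, gradient (f k) x l⟫ = f k x) (y : κ → ℝ) (c : ℝ) :
    ⟪x l, gradient (fun z => c * ∑ k, (f k z - y k) ^ 2) x l⟫ =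
      2 * c * ∑ k, (f k x - y k) * f k x := by
  simp only [inner_gradient_apply] at heuler ⊢
  rw [fderiv_const_mul_sum_sq_sub_apply hf, Finset.mul_sum, Finset.mul_sum]
  simp only [heuler]
  exact Finset.sum_congr rfl fun k _ => by ring

end PiLp

theorem neg_sum_mul_le_sqrt_card_mul_sum_sq_mul {ι : Type*} [Fintype ι] [Nonempty ι]
    (r y : ι → ℝ) {C : ℝ} (hy : ∀ i, |y i| ≤ C) :
    -∑ i, r i * y i ≤ √(Fintype.card ι * ∑ i, r i ^ 2) * C := by
  have hC : 0 ≤ C := (abs_nonneg _).trans (hy (Classical.arbitrary ι))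
  have hy_sq : ∑ i, y i ^ 2 ≤ Fintype.card ι * C ^ 2 := by
    calc ∑ i, y i ^ 2 ≤ ∑ _i : ι, C ^ 2 :=
          Finset.sum_le_sum fun i _ => sq_le_sq' (neg_le_of_abs_le (hy i)) (le_of_abs_le (hy i))
      _ = Fintype.card ι * C ^ 2 := by simp
  calc -∑ i, r i * y i = ∑ i, r i * -y i := by simp [Finset.sum_neg_distrib]
    _ ≤ √(∑ i, r i ^ 2) * √(∑ i, (-y i) ^ 2) := Real.sum_mul_le_sqrt_mul_sqrt _ _ _
    _ ≤ √(∑ i, r i ^ 2) * √(Fintype.card ι * C ^ 2) := by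
        gcongr
        simpa using hy_sq
    _ = √(Fintype.card ι * ∑ i, r i ^ 2) * C := by
        rw [Real.sqrt_mul (by positivity), Real.sqrt_mul (by positivity), Real.sqrt_sq hC]
        ring

theorem neg_two_div_card_mul_sum_mul_add_le {ι : Type*} [Fintype ι] (r y : ι → ℝ) {C : ℝ}
    (hy : ∀ i, |y i| ≤ C) :
    -(2 / Fintype.card ι) * ∑ i, r i * (r i + y i) ≤
      2 * √((∑ i, r i ^ 2) / Fintype.card ι) * (C - √((∑ i, r i ^ 2) / Fintype.card ι)) := by
  rcases isEmpty_or_nonempty ι with hι | hι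
  · simp -- both sides are `0`, as `2 / 0 = 0` in Lean
  set N : ℝ := (Fintype.card ι : ℝ)
  set S := ∑ i, r i ^ 2
  have hN : 0 < N := Nat.cast_pos.mpr Fintype.card_pos
  set ρ := √(S / N)
  have hρ_sq : ρ ^ 2 = S / N := Real.sq_sqrt (by positivity)
  have hcs : -∑ i, r i * y i ≤ N * ρ * C := by
    have hsqrt : √(N * S) = N * ρ := by
      rw [show N * S = N ^ 2 * (S / N) by field_simp, Real.sqrt_mul (sq_nonneg N),
        Real.sqrt_sq hN.le]
    rw [← hsqrt]
    exact neg_sum_mul_le_sqrt_card_mul_sum_sq_mul r y hy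
  have hsplit : ∑ i, r i * (r i + y i) = N * ρ ^ 2 + ∑ i, r i * y i := by
    rw [hρ_sq, mul_div_cancel₀ _ hN.ne', ← Finset.sum_add_distrib]
    exact Finset.sum_congr rfl fun i _ => by ring
  calc -(2 / N) * ∑ i, r i * (r i + y i) = -2 * ρ ^ 2 + 2 / N * -∑ i, r i * y i := by
        rw [hsplit]; field_simp; ring
    _ ≤ -2 * ρ ^ 2 + 2 / N * (N * ρ * C) := by gcongr
    _ = 2 * ρ * (C - ρ) := by field_simp; ring

theorem stmt_13_general (L : ℕ) (q : Fin (L + 1) → ℕ) (n : ℕ)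
    (f : Fin n → PiLp 2 (fun l : Fin (L + 1) => EuclideanSpace ℝ (Fin (q l))) → ℝ)
    (hf : ∀ i, Differentiable ℝ (f i))
    (y : Fin n → ℝ) (Cy : ℝ) (hy : ∀ i, |y i| ≤ Cy)
    (Ln : PiLp 2 (fun l : Fin (L + 1) => EuclideanSpace ℝ (Fin (q l))) → ℝ)
    (hLn : ∀ Θ', Ln Θ' = (1 / (2 * (n : ℝ))) * ∑ i, (f i Θ' - y i) ^ 2)
    (heuler : ∀ i, ∀ Θ' : PiLp 2 (fun l : Fin (L + 1) => EuclideanSpace ℝ (Fin (q l))),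
      ∀ l : Fin (L + 1),
        ⟪Θ' l, gradient (fun v => f i (WithLp.toLp 2 (Function.update Θ' l v))) (Θ' l)⟫ = f i Θ')
    (Θ : ℝ → PiLp 2 (fun l : Fin (L + 1) => EuclideanSpace ℝ (Fin (q l))))
    (hflow : ∀ t : ℝ, HasDerivAt Θ (-(gradient Ln (Θ t))) t) :
    ∀ t : ℝ, 0 ≤ t → ∀ l : Fin (L + 1),
      deriv (fun s => ‖Θ s l‖ ^ 2) t ≤
        2 * Real.sqrt (2 * Ln (Θ t)) * (Cy - Real.sqrt (2 * Ln (Θ t))) := by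
  intro t _ l
  obtain rfl : Ln = fun Θ' => (1 / (2 * (n : ℝ))) * ∑ i, (f i Θ' - y i) ^ 2 := funext hLn
  have hblock : HasDerivAt (fun s => ‖Θ s l‖ ^ 2) (2 * ⟪Θ t l, -gradient _ (Θ t) l⟫) t :=
    ((PiLp.hasFDerivAt_apply 2 (Θ t) l).comp_hasDerivAt t (hflow t)).norm_sq
  have hgrad := PiLp.inner_apply_gradient_const_mul_sum_sq_sub (fun i => (hf i).differentiableAt) l
    (fun i => (PiLp.gradient_comp_toLp_update (hf i).differentiableAt l) ▸ heuler i (Θ t) l) y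
    (1 / (2 * (n : ℝ)))
  have hbound := neg_two_div_card_mul_sum_mul_add_le (fun i => f i (Θ t) - y i) y hy
  simp only [sub_add_cancel, Fintype.card_fin] at hbound
  have hrms : 2 * (1 / (2 * (n : ℝ)) * ∑ i, (f i (Θ t) - y i) ^ 2) =
      (∑ i, (f i (Θ t) - y i) ^ 2) / n := by ring
  calc deriv (fun s => ‖Θ s l‖ ^ 2) t
      = -(2 / n) * ∑ i, (f i (Θ t) - y i) * f i (Θ t) := by
        rw [hblock.deriv, inner_neg_right, hgrad]; ring
    _ ≤ _ := hbound
    _ = _ := by rw [hrms]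

/-- Along gradient flow for the quadratic empirical risk, with the per-block Euler
identity, each block norm satisfies
`d/dt ‖Θ^(l)(t)‖² ≤ 2√(2 Lₙ) (C_y − √(2 Lₙ))`. -/
theorem stmt_13 (L : ℕ) (q : Fin (L + 1) → ℕ) (n : ℕ) (hn : 0 < n)
    (f : Fin n → PiLp 2 (fun l : Fin (L + 1) => EuclideanSpace ℝ (Fin (q l))) → ℝ)
    (hf : ∀ i, Differentiable ℝ (f i))
    (y : Fin n → ℝ) (Cy : ℝ) (hy : ∀ i, |y i| ≤ Cy)
    (Ln : PiLp 2 (fun l : Fin (L + 1) => EuclideanSpace ℝ (Fin (q l))) → ℝ)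
    (hLn : ∀ Θ', Ln Θ' = (1 / (2 * (n : ℝ))) * ∑ i, (f i Θ' - y i) ^ 2)
    (heuler : ∀ i, ∀ Θ' : PiLp 2 (fun l : Fin (L + 1) => EuclideanSpace ℝ (Fin (q l))),
      ∀ l : Fin (L + 1),
        ⟪Θ' l, gradient (fun v => f i (WithLp.toLp 2 (Function.update Θ' l v))) (Θ' l)⟫ = f i Θ')
    (Θ : ℝ → PiLp 2 (fun l : Fin (L + 1) => EuclideanSpace ℝ (Fin (q l))))
    (hflow : ∀ t : ℝ, HasDerivAt Θ (-(gradient Ln (Θ t))) t) :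
    ∀ t : ℝ, 0 ≤ t → ∀ l : Fin (L + 1),
      deriv (fun s => ‖Θ s l‖ ^ 2) t ≤
        2 * Real.sqrt (2 * Ln (Θ t)) * (Cy - Real.sqrt (2 * Ln (Θ t))) :=
  stmt_13_general L q n f hf y Cy hy Ln hLn heuler Θ hflow
end

section
/- Let (a_t)_{t≥0} be a nonnegative sequence satisfying a_{t+1} ≤ a_t + η_t² K a_t^L + 2η_t ψ_t, where K > 0, L ≥ 1, ψ_t ∈ [0, 1/4], and η_t = η/(t+1)^α with α ∈ ((L+1)/(L+2), 1). Then, provided η is sufficiently small (depending on a_0, K, L, α), for all T ≥ 1: a_T ≤ (1+3λ²)a_0 + Σ_{t=0}^{T-1} 2η_t ψ_t, for any fixed λ ∈ (0, 1/√3) used in the smallness condition on η. -/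
/-!
Write `Q t = ∑_{s<t} η_s² K a_s^L` and `S t = ∑_{s<t} 2 η_s ψ_s`. Telescoping gives
`a t ≤ a 0 + Q t + S t`, so it suffices to show `Q t ≤ 2 λ² a 0` for every `t`.
Since `ψ ≤ 1/4`, comparison with `∫ x^(-α)` gives `S t ≤ η t^(1-α) / (2(1-α)) ≤ λ² a 0 t^(1-α)`.
The bound on `Q` is a bootstrap: while `Q t ≤ 2 λ² a 0`, every `a s` with `s ≤ t` is at most
`(1 + 3λ²) a 0 (s+1)^(1-α)`, hence `η_s² K a_s^L ≤ η² K ((1 + 3λ²) a 0)^L (s+1)^(-p)` with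
`p = (L+2)α - L ∈ (1, 2)`. Summing with `∑ (s+1)^(-p) ≤ p/(p-1)` and using the smallness of `η`
gives `Q (t+1) ≤ λ² p a 0 ≤ 2 λ² a 0`.
-/

open Finset Real

lemma sum_range_add_two_rpow_neg_le {p : ℝ} (hp0 : 0 ≤ p) (hp1 : p ≠ 1) (n : ℕ) :
    ∑ i ∈ range n, ((i : ℝ) + 2) ^ (-p) ≤ (((n : ℝ) + 1) ^ (1 - p) - 1) / (1 - p) := by
  have hanti : AntitoneOn (fun x : ℝ => x ^ (-p)) (Set.Icc 1 (1 + n)) :=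
    (antitoneOn_rpow_Ioi_of_exponent_nonpos (neg_nonpos.mpr hp0)).mono
      fun x hx => lt_of_lt_of_le one_pos hx.1
  have hint : ∫ x in (1 : ℝ)..1 + n, x ^ (-p) = (((n : ℝ) + 1) ^ (1 - p) - 1) / (1 - p) := by
    rw [integral_rpow (Or.inr ⟨by contrapose! hp1; linarith, ?_⟩)]
    · rw [one_rpow, add_comm (1 : ℝ), neg_add_eq_sub]
    · rw [Set.uIcc_of_le (by linarith [n.cast_nonneg (α := ℝ)])]
      exact fun h => absurd h.1 (by norm_num)
  rw [← hint]
  convert hanti.sum_le_integral using 3 with i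
  push_cast; ring

lemma sum_range_succ_add_one_rpow_neg_le {p : ℝ} (hp0 : 0 ≤ p) (hp1 : p ≠ 1) (n : ℕ) :
    ∑ i ∈ range (n + 1), ((i : ℝ) + 1) ^ (-p) ≤ (((n : ℝ) + 1) ^ (1 - p) - 1) / (1 - p) + 1 := by
  rw [sum_range_succ']
  push_cast
  simp only [add_assoc, one_add_one_eq_two, zero_add, one_rpow]
  gcongr
  exact sum_range_add_two_rpow_neg_le hp0 hp1 n

lemma sum_range_add_one_rpow_neg_le_of_lt_one {p : ℝ} (hp0 : 0 ≤ p) (hp1 : p < 1) (n : ℕ) :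
    ∑ i ∈ range n, ((i : ℝ) + 1) ^ (-p) ≤ (n : ℝ) ^ (1 - p) / (1 - p) := by
  have hp : 0 < 1 - p := by linarith
  cases n with
  | zero => simp [zero_rpow hp.ne']
  | succ n =>
    have hfrac : 1 ≤ 1 / (1 - p) := by rw [le_div_iff₀ hp]; linarith
    calc _ ≤ (((n : ℝ) + 1) ^ (1 - p) - 1) / (1 - p) + 1 :=
          sum_range_succ_add_one_rpow_neg_le hp0 hp1.ne n
      _ ≤ ((n + 1 : ℕ) : ℝ) ^ (1 - p) / (1 - p) := by
          rw [sub_div]; push_cast; linarith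

lemma sum_range_add_one_rpow_neg_le_of_one_lt {p : ℝ} (hp : 1 < p) (n : ℕ) :
    ∑ i ∈ range n, ((i : ℝ) + 1) ^ (-p) ≤ p / (p - 1) := by
  have hp1 : 0 < p - 1 := by linarith
  have hbound : p / (p - 1) = 1 / (p - 1) + 1 := by field_simp; ring
  cases n with
  | zero => simp only [range_zero, sum_empty]; positivity
  | succ n =>
    have hpow : 0 ≤ ((n : ℝ) + 1) ^ (1 - p) := by positivity
    calc _ ≤ (((n : ℝ) + 1) ^ (1 - p) - 1) / (1 - p) + 1 :=
          sum_range_succ_add_one_rpow_neg_le (by linarith) hp.ne' n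
      _ = (1 - ((n : ℝ) + 1) ^ (1 - p)) / (p - 1) + 1 := by
          rw [← neg_sub p 1, div_neg, ← neg_div, neg_sub]
      _ ≤ p / (p - 1) := by
          rw [hbound]; gcongr; linarith

lemma le_add_sum_add_sum_of_le_add {a b c : ℕ → ℝ} (h : ∀ t, a (t + 1) ≤ a t + b t + c t)
    (n : ℕ) : a n ≤ a 0 + ∑ t ∈ range n, b t + ∑ t ∈ range n, c t := by
  induction n with
  | zero => simp
  | succ n ih => rw [sum_range_succ, sum_range_succ]; linarith [h n]

lemma sq_mul_sq_le_of_le_div {η c D : ℝ} (hη : 0 ≤ η) (hD : 0 < D) (h : η ≤ c / D) :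
    η ^ 2 * D ^ 2 ≤ c ^ 2 := by
  rw [← mul_pow]
  exact pow_le_pow_left₀ (by positivity) ((le_div_iff₀ hD).1 h) 2

lemma rpow_div_two_sq {x : ℝ} (hx : 0 ≤ x) (r : ℝ) : (x ^ (r / 2)) ^ 2 = x ^ r := by
  rw [← rpow_natCast, ← rpow_mul hx]; norm_num

/-- The step size `η_t` of the paper. -/
noncomputable def stepSize (η α : ℝ) (t : ℕ) : ℝ := η / ((t : ℝ) + 1) ^ α

section Recursion

variable {L : ℕ} {K α η lam : ℝ} {a ψ : ℕ → ℝ}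

lemma sum_two_mul_stepSize_mul_le (hη : 0 ≤ η) (hα0 : 0 ≤ α) (hα1 : α < 1)
    (hψ : ∀ t, ψ t ≤ 1 / 4) (n : ℕ) :
    ∑ t ∈ range n, 2 * stepSize η α t * ψ t ≤ η / (2 * (1 - α)) * (n : ℝ) ^ (1 - α) := by
  have hterm (t : ℕ) : 2 * stepSize η α t * ψ t ≤ η / 2 * ((t : ℝ) + 1) ^ (-α) := by
    have hstep : 0 ≤ stepSize η α t := by unfold stepSize; positivity
    calc 2 * stepSize η α t * ψ t ≤ 2 * stepSize η α t * (1 / 4) := by gcongr; exact hψ t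
      _ = η / 2 * ((t : ℝ) + 1) ^ (-α) := by
          rw [stepSize, rpow_neg (by positivity)]; ring
  calc _ ≤ ∑ t ∈ range n, η / 2 * ((t : ℝ) + 1) ^ (-α) := sum_le_sum fun t _ => hterm t
    _ = η / 2 * ∑ t ∈ range n, ((t : ℝ) + 1) ^ (-α) := (mul_sum ..).symm
    _ ≤ η / 2 * ((n : ℝ) ^ (1 - α) / (1 - α)) := by
        gcongr; exact sum_range_add_one_rpow_neg_le_of_lt_one hα0 hα1 n
    _ = η / (2 * (1 - α)) * (n : ℝ) ^ (1 - α) := by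
        have : 1 - α ≠ 0 := by linarith
        field_simp

lemma stepSize_sq_mul_pow_le {M x : ℝ} (hK : 0 ≤ K) (hx : 0 ≤ x) (s : ℕ)
    (h : x ≤ M * ((s : ℝ) + 1) ^ (1 - α)) :
    stepSize η α s ^ 2 * K * x ^ L ≤
      η ^ 2 * K * M ^ L * ((s : ℝ) + 1) ^ (-(((L : ℝ) + 2) * α - L)) := by
  have hu : (0 : ℝ) < (s : ℝ) + 1 := by positivity
  have hexp : ((s : ℝ) + 1) ^ (-(((L : ℝ) + 2) * α - L)) =
      (((s : ℝ) + 1) ^ (1 - α)) ^ L / (((s : ℝ) + 1) ^ α) ^ 2 := by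
    rw [← rpow_natCast, ← rpow_mul hu.le, ← rpow_natCast, ← rpow_mul hu.le, ← rpow_sub hu]
    congr 1; push_cast; ring
  calc stepSize η α s ^ 2 * K * x ^ L
      ≤ stepSize η α s ^ 2 * K * (M * ((s : ℝ) + 1) ^ (1 - α)) ^ L := by gcongr
    _ = η ^ 2 * K * M ^ L * ((s : ℝ) + 1) ^ (-(((L : ℝ) + 2) * α - L)) := by
        rw [hexp, stepSize]; ring

lemma le_mul_rpow_of_sum_le (hα0 : 0 ≤ α) (hα1 : α < 1) (hη : 0 ≤ η)
    (hψ : ∀ t, ψ t ≤ 1 / 4) (ha0 : 0 ≤ a 0) (hdrift : η ≤ 2 * (1 - α) * lam ^ 2 * a 0)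
    (hrec : ∀ t, a (t + 1) ≤ a t + stepSize η α t ^ 2 * K * a t ^ L + 2 * stepSize η α t * ψ t)
    (s : ℕ) (hQ : ∑ t ∈ range s, stepSize η α t ^ 2 * K * a t ^ L ≤ 2 * lam ^ 2 * a 0) :
    a s ≤ (1 + 3 * lam ^ 2) * a 0 * ((s : ℝ) + 1) ^ (1 - α) := by
  have htel := le_add_sum_add_sum_of_le_add hrec s
  have hS := sum_two_mul_stepSize_mul_le hη hα0 hα1 hψ s
  have hcoef : η / (2 * (1 - α)) ≤ lam ^ 2 * a 0 := by
    rw [div_le_iff₀ (by linarith)]; linarith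
  have hmono : (s : ℝ) ^ (1 - α) ≤ ((s : ℝ) + 1) ^ (1 - α) := by
    gcongr; linarith
  have hone : 1 ≤ ((s : ℝ) + 1) ^ (1 - α) :=
    one_le_rpow (by linarith [s.cast_nonneg (α := ℝ)]) (by linarith)
  have hS' : ∑ t ∈ range s, 2 * stepSize η α t * ψ t ≤ lam ^ 2 * a 0 * (s : ℝ) ^ (1 - α) :=
    hS.trans (by gcongr)
  have hl : 0 ≤ lam ^ 2 * a 0 := by positivity
  calc a s ≤ a 0 + 2 * lam ^ 2 * a 0 + lam ^ 2 * a 0 * (s : ℝ) ^ (1 - α) := by linarith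
    _ ≤ (1 + 3 * lam ^ 2) * a 0 * ((s : ℝ) + 1) ^ (1 - α) := by nlinarith

lemma sum_stepSize_sq_mul_pow_le (hK : 0 ≤ K) (hα : (L : ℝ) + 1 < ((L : ℝ) + 2) * α)
    (hα1 : α < 1) (hη : 0 ≤ η) (hψ : ∀ t, ψ t ≤ 1 / 4) (ha : ∀ t, 0 ≤ a t) (ha0 : 0 < a 0)
    (hdrift : η ≤ 2 * (1 - α) * lam ^ 2 * a 0)
    (hquad : η ^ 2 * K * (1 + 3 * lam ^ 2) ^ L * a 0 ^ ((L : ℝ) - 1) ≤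
      lam ^ 2 * (((L : ℝ) + 2) * α - ((L : ℝ) + 1)))
    (hrec : ∀ t, a (t + 1) ≤ a t + stepSize η α t ^ 2 * K * a t ^ L + 2 * stepSize η α t * ψ t)
    (n : ℕ) : ∑ t ∈ range n, stepSize η α t ^ 2 * K * a t ^ L ≤ 2 * lam ^ 2 * a 0 := by
  set p := ((L : ℝ) + 2) * α - L with hp
  have hp1 : 1 < p := by linarith
  have hp2 : p ≤ 2 := by nlinarith
  have hα0 : 0 ≤ α := by nlinarith
  have hC : η ^ 2 * K * ((1 + 3 * lam ^ 2) * a 0) ^ L ≤ lam ^ 2 * (p - 1) * a 0 := by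
    have hpow : a 0 ^ L = a 0 ^ ((L : ℝ) - 1) * a 0 := by
      rw [rpow_sub_one ha0.ne', rpow_natCast, div_mul_cancel₀ _ ha0.ne']
    calc η ^ 2 * K * ((1 + 3 * lam ^ 2) * a 0) ^ L
        = η ^ 2 * K * (1 + 3 * lam ^ 2) ^ L * a 0 ^ ((L : ℝ) - 1) * a 0 := by
          rw [mul_pow, hpow]; ring
      _ ≤ lam ^ 2 * (p - 1) * a 0 := by
          refine mul_le_mul_of_nonneg_right (hquad.trans_eq ?_) ha0.le
          rw [hp]; ring
  have hterm_nonneg (t : ℕ) : 0 ≤ stepSize η α t ^ 2 * K * a t ^ L := by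
    have := ha t; positivity
  induction n with
  | zero => simp only [range_zero, sum_empty]; positivity
  | succ n ih =>
    have hgrowth (s : ℕ) (hs : s ∈ range (n + 1)) :
        a s ≤ (1 + 3 * lam ^ 2) * a 0 * ((s : ℝ) + 1) ^ (1 - α) :=
      le_mul_rpow_of_sum_le hα0 hα1 hη hψ ha0.le hdrift hrec s <|
        (sum_le_sum_of_subset_of_nonneg (range_subset_range.2 (mem_range_succ_iff.1 hs))
          fun t _ _ => hterm_nonneg t).trans ih
    calc _ ≤ ∑ s ∈ range (n + 1),
            η ^ 2 * K * ((1 + 3 * lam ^ 2) * a 0) ^ L * ((s : ℝ) + 1) ^ (-p) :=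
          sum_le_sum fun s hs => stepSize_sq_mul_pow_le hK (ha s) s (hgrowth s hs)
      _ = η ^ 2 * K * ((1 + 3 * lam ^ 2) * a 0) ^ L * ∑ s ∈ range (n + 1), ((s : ℝ) + 1) ^ (-p) :=
          (mul_sum ..).symm
      _ ≤ lam ^ 2 * (p - 1) * a 0 * (p / (p - 1)) :=
          mul_le_mul hC (sum_range_add_one_rpow_neg_le_of_one_lt hp1 (n + 1))
            (sum_nonneg fun s _ => by positivity) (by nlinarith [sq_nonneg lam])
      _ = lam ^ 2 * p * a 0 := by
          have : p - 1 ≠ 0 := by linarith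
          field_simp
      _ ≤ 2 * lam ^ 2 * a 0 := by
          have hl : 0 ≤ lam ^ 2 * a 0 := by positivity
          nlinarith

end Recursion

theorem stmt_15_general (L : ℕ) (K : ℝ) (hK : 0 < K)
    (α : ℝ) (hα1 : ((L : ℝ) + 1) / ((L : ℝ) + 2) < α) (hα2 : α < 1)
    (lam : ℝ)
    (a : ℕ → ℝ) (ha : ∀ t, 0 ≤ a t) (ha0 : 0 < a 0)
    (ψ : ℕ → ℝ) (hψ1 : ∀ t, ψ t ≤ 1 / 4)
    (η : ℝ) (hη0 : 0 < η)
    (hηsmall : η ≤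
      min (lam / (Real.sqrt K * a 0 ^ (((L : ℝ) - 1) / 2)))
        (min (2 * (1 - α) * lam ^ 2 * a 0)
          (lam * Real.sqrt (((L : ℝ) + 2) * α - ((L : ℝ) + 1)) /
            (Real.sqrt K * (1 + 3 * lam ^ 2) ^ ((L : ℝ) / 2) *
              a 0 ^ (((L : ℝ) - 1) / 2)))))
    (hrec : ∀ t : ℕ,
      a (t + 1) ≤ a t + (η / ((t : ℝ) + 1) ^ α) ^ 2 * K * (a t) ^ L +
        2 * (η / ((t : ℝ) + 1) ^ α) * ψ t) :
    ∀ T : ℕ, 1 ≤ T →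
      a T ≤ (1 + 3 * lam ^ 2) * a 0 +
        ∑ t ∈ Finset.range T, 2 * (η / ((t : ℝ) + 1) ^ α) * ψ t := by
  have hα : (L : ℝ) + 1 < ((L : ℝ) + 2) * α := by
    rwa [div_lt_iff₀ (by positivity), mul_comm] at hα1
  have hdrift : η ≤ 2 * (1 - α) * lam ^ 2 * a 0 :=
    hηsmall.trans ((min_le_right _ _).trans (min_le_left _ _))
  have hquad : η ^ 2 * K * (1 + 3 * lam ^ 2) ^ L * a 0 ^ ((L : ℝ) - 1) ≤
      lam ^ 2 * (((L : ℝ) + 2) * α - ((L : ℝ) + 1)) := by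
    have h := sq_mul_sq_le_of_le_div hη0.le (by positivity)
      (hηsmall.trans ((min_le_right _ _).trans (min_le_right _ _)))
    rwa [mul_pow, mul_pow, mul_pow, sq_sqrt hK.le, rpow_div_two_sq (by positivity),
      rpow_div_two_sq ha0.le, rpow_natCast, sq_sqrt (by linarith), ← mul_assoc, ← mul_assoc] at h
  replace hrec : ∀ t, a (t + 1) ≤
      a t + stepSize η α t ^ 2 * K * a t ^ L + 2 * stepSize η α t * ψ t := hrec
  intro T _
  show a T ≤ _ + ∑ t ∈ range T, 2 * stepSize η α t * ψ t
  have htel := le_add_sum_add_sum_of_le_add hrec T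
  have hquadSum := sum_stepSize_sq_mul_pow_le hK.le hα hα2 hη0.le hψ1 ha ha0 hdrift hquad hrec T
  have hl : 0 ≤ lam ^ 2 * a 0 := by positivity
  linarith

/-- Abstract GD norm recursion: if `a_{t+1} ≤ a_t + η_t² K a_t^L + 2 η_t ψ_t` with
`η_t = η/(t+1)^α`, `α ∈ ((L+1)/(L+2), 1)`, `ψ_t ∈ [0, 1/4]`, and `η` small enough
(depending on `a₀, K, L, α` through the fixed `λ ∈ (0, 1/√3)`), then
`a_T ≤ (1+3λ²) a₀ + Σ_{t<T} 2 η_t ψ_t` for all `T ≥ 1`. -/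
theorem stmt_15 (L : ℕ) (hL : 1 ≤ L) (K : ℝ) (hK : 0 < K)
    (α : ℝ) (hα1 : ((L : ℝ) + 1) / ((L : ℝ) + 2) < α) (hα2 : α < 1)
    (lam : ℝ) (hlam0 : 0 < lam) (hlam1 : lam < 1 / Real.sqrt 3)
    (a : ℕ → ℝ) (ha : ∀ t, 0 ≤ a t) (ha0 : 0 < a 0)
    (ψ : ℕ → ℝ) (hψ0 : ∀ t, 0 ≤ ψ t) (hψ1 : ∀ t, ψ t ≤ 1 / 4)
    (η : ℝ) (hη0 : 0 < η)
    (hηsmall : η ≤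
      min (lam / (Real.sqrt K * a 0 ^ (((L : ℝ) - 1) / 2)))
        (min (2 * (1 - α) * lam ^ 2 * a 0)
          (lam * Real.sqrt (((L : ℝ) + 2) * α - ((L : ℝ) + 1)) /
            (Real.sqrt K * (1 + 3 * lam ^ 2) ^ ((L : ℝ) / 2) *
              a 0 ^ (((L : ℝ) - 1) / 2)))))
    (hrec : ∀ t : ℕ,
      a (t + 1) ≤ a t + (η / ((t : ℝ) + 1) ^ α) ^ 2 * K * (a t) ^ L +
        2 * (η / ((t : ℝ) + 1) ^ α) * ψ t) :
    ∀ T : ℕ, 1 ≤ T →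
      a T ≤ (1 + 3 * lam ^ 2) * a 0 +
        ∑ t ∈ Finset.range T, 2 * (η / ((t : ℝ) + 1) ^ α) * ψ t :=
  stmt_15_general L K hK α hα1 hα2 lam a ha ha0 ψ hψ1 η hη0 hηsmall hrec
end

section
/- Let ℓ(f,g) = |f−g|^α/α with integer α ≥ 2, and let L_n(Θ) = (1/n)Σ_i ℓ(f(x_i;Θ), y_i) with |y_i| ≤ C_y. If f satisfies the per-block Euler identity ⟨Θ^(l), ∂f(x;Θ)/∂Θ^(l)⟩ = f(x;Θ), then −2⟨Θ^(l), ∂L_n/∂Θ^(l)⟩ ≤ 2·(αL_n(Θ))^{(α−1)/α}·(C_y − (αL_n(Θ))^{1/α}). -/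
/-!
Write `dᵢ = f(xᵢ; Θ) - yᵢ` and `ℓ'(d) = |d|^(α-2) d`. By the chain rule and the Euler identity,
`⟨Θ^(l), ∂Lₙ/∂Θ^(l)⟩ = (1/n) Σ ℓ'(dᵢ) f(xᵢ; Θ) = (1/n) Σ ℓ'(dᵢ) (dᵢ + yᵢ)`.
Since `ℓ'(d) d = |d|^α`, the first part is `M = α Lₙ`; the second is at most
`C_y (1/n) Σ |dᵢ|^(α-1) ≤ C_y M^((α-1)/α)` in absolute value, by the power mean inequality
(Hölder with exponents `α/(α-1)` and `α`). Finally `M = M^((α-1)/α) M^(1/α)`.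
-/

open scoped RealInnerProductSpace

open Finset

theorem differentiable_toLp_update {ι : Type*} [Fintype ι] [DecidableEq ι] {E : ι → Type*}
    [∀ i, NormedAddCommGroup (E i)] [∀ i, NormedSpace ℝ (E i)] (p : ENNReal) [Fact (1 ≤ p)]
    (x : PiLp p E) (l : ι) :
    Differentiable ℝ (fun v : E l => WithLp.toLp p (Function.update x l v)) :=
  (PiLp.contDiff_toLp (n := 1)).differentiable one_ne_zero |>.comp
    fun v => (hasFDerivAt_update _ v).differentiableAt

theorem inner_gradient_const_mul_sum_comp {E ι : Type*} [NormedAddCommGroup E]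
    [InnerProductSpace ℝ E] [CompleteSpace E] (s : Finset ι) (c : ℝ) {g : ι → E → ℝ}
    {φ : ι → ℝ → ℝ} {φ' : ι → ℝ} {x : E} (hg : ∀ i ∈ s, DifferentiableAt ℝ (g i) x)
    (hφ : ∀ i ∈ s, HasDerivAt (φ i) (φ' i) (g i x)) (v : E) :
    ⟪v, gradient (fun u => c * ∑ i ∈ s, φ i (g i u)) x⟫ =
      c * ∑ i ∈ s, φ' i * ⟪v, gradient (g i) x⟫ := by
  have hsum : HasFDerivAt (fun u => c * ∑ i ∈ s, φ i (g i u))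
      (c • ∑ i ∈ s, φ' i • fderiv ℝ (g i) x) x :=
    (HasFDerivAt.fun_sum fun i hi =>
      (hφ i hi).comp_hasFDerivAt x (hg i hi).hasFDerivAt).const_mul c
  simp [inner_gradient_right, hsum.fderiv]

noncomputable def powLossDeriv (α d : ℝ) : ℝ := |d| ^ (α - 2) * d

theorem hasDerivAt_abs_sub_rpow_div {α : ℝ} (hα : 1 < α) (y t : ℝ) :
    HasDerivAt (fun s => |s - y| ^ α / α) (powLossDeriv α (t - y)) t := by
  have h := ((hasDerivAt_abs_rpow (t - y) hα).comp t ((hasDerivAt_id t).sub_const y)).div_const α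
  rwa [mul_one, mul_assoc, mul_div_cancel_left₀ _ (by linarith)] at h

theorem sum_mul_rpow_le_rpow_sum_mul_rpow {ι : Type*} (s : Finset ι) (w z : ι → ℝ)
    (hw : ∀ i ∈ s, 0 ≤ w i) (hw₁ : ∑ i ∈ s, w i = 1) (hz : ∀ i ∈ s, 0 ≤ z i) {r t : ℝ}
    (hr : 0 < r) (hrt : r ≤ t) :
    ∑ i ∈ s, w i * z i ^ r ≤ (∑ i ∈ s, w i * z i ^ t) ^ (r / t) := by
  have h := Real.arith_mean_le_rpow_mean s w (fun i => z i ^ r) hw hw₁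
    (fun i hi => Real.rpow_nonneg (hz i hi) r) (p := t / r) ((one_le_div hr).2 hrt)
  have hpow : ∀ i ∈ s, (z i ^ r) ^ (t / r) = z i ^ t := fun i hi => by
    rw [← Real.rpow_mul (hz i hi), mul_div_cancel₀ t hr.ne']
  rw [one_div_div] at h
  convert h using 2
  exact sum_congr rfl fun i hi => by rw [hpow i hi]

theorem powLossDeriv_mul_self {α : ℝ} (hα : 1 < α) (d : ℝ) :
    powLossDeriv α d * d = |d| ^ α := by
  rw [powLossDeriv, mul_assoc, ← abs_mul_abs_self, ← mul_assoc,
    ← Real.rpow_add_one' (abs_nonneg d) (by linarith), ← Real.rpow_add_one' (abs_nonneg d)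
      (by linarith)]
  ring_nf

theorem abs_powLossDeriv {α : ℝ} (hα : 1 < α) (d : ℝ) :
    |powLossDeriv α d| = |d| ^ (α - 1) := by
  rw [powLossDeriv, abs_mul, abs_of_nonneg (Real.rpow_nonneg (abs_nonneg d) _),
    ← Real.rpow_add_one' (abs_nonneg d) (by linarith)]
  ring_nf

theorem neg_sum_mul_powLossDeriv_mul_add_le {ι : Type*} (s : Finset ι) (w d y : ι → ℝ)
    (hw : ∀ i ∈ s, 0 ≤ w i) (hw₁ : ∑ i ∈ s, w i = 1) {C : ℝ} (hy : ∀ i ∈ s, |y i| ≤ C)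
    {α : ℝ} (hα : 1 < α) :
    -∑ i ∈ s, w i * (powLossDeriv α (d i) * (d i + y i)) ≤
      (∑ i ∈ s, w i * |d i| ^ α) ^ ((α - 1) / α) *
        (C - (∑ i ∈ s, w i * |d i| ^ α) ^ (1 / α)) := by
  set M := ∑ i ∈ s, w i * |d i| ^ α
  have hM : 0 ≤ M := sum_nonneg fun i hi => mul_nonneg (hw i hi) (by positivity)
  obtain ⟨j, hj⟩ : s.Nonempty := nonempty_of_sum_ne_zero (by rw [hw₁]; exact one_ne_zero)
  have hC : 0 ≤ C := (abs_nonneg _).trans (hy j hj)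
  have hcross : ∀ i ∈ s,
      -(w i * (powLossDeriv α (d i) * y i)) ≤ C * (w i * |d i| ^ (α - 1)) := by
    intro i hi
    have hterm : -(powLossDeriv α (d i) * y i) ≤ |d i| ^ (α - 1) * C :=
      calc -(powLossDeriv α (d i) * y i) ≤ |(powLossDeriv α (d i) * y i)| := neg_le_abs _
        _ = |d i| ^ (α - 1) * |y i| := by rw [abs_mul, abs_powLossDeriv hα]
        _ ≤ |d i| ^ (α - 1) * C := by gcongr; exact hy i hi
    nlinarith [hw i hi]
  have hpowerMean : ∑ i ∈ s, w i * |d i| ^ (α - 1) ≤ M ^ ((α - 1) / α) :=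
    sum_mul_rpow_le_rpow_sum_mul_rpow s w _ hw hw₁ (fun i _ => abs_nonneg (d i))
      (by linarith) (by linarith)
  have hsplit : M ^ ((α - 1) / α) * M ^ (1 / α) = M := by
    have hexp : (α - 1) / α + 1 / α = 1 := by
      rw [← add_div, sub_add_cancel, div_self (by linarith)]
    rw [← Real.rpow_add' hM (by rw [hexp]; exact one_ne_zero), hexp, Real.rpow_one]
  calc -∑ i ∈ s, w i * (powLossDeriv α (d i) * (d i + y i))
      = -M + ∑ i ∈ s, -(w i * (powLossDeriv α (d i) * y i)) := by
        simp only [M, mul_add, ← powLossDeriv_mul_self hα, sum_add_distrib, sum_neg_distrib]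
        ring
    _ ≤ -M + C * ∑ i ∈ s, w i * |d i| ^ (α - 1) := by
        rw [mul_sum]; gcongr with i hi; exact hcross i hi
    _ ≤ -M + C * M ^ ((α - 1) / α) := by gcongr
    _ = M ^ ((α - 1) / α) * (C - M ^ (1 / α)) := by rw [mul_sub, hsplit]; ring

/-- Power-type loss extension: with `ℓ(f,g) = |f−g|^a/a`, `a ≥ 2`, the per-block
Euler identity yields
`−2⟨Θ^(l), ∂Lₙ/∂Θ^(l)⟩ ≤ 2 (a Lₙ)^{(a−1)/a} (C_y − (a Lₙ)^{1/a})`. -/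
theorem stmt_16 (Lnum : ℕ) (q : Fin (Lnum + 1) → ℕ) (n : ℕ) (hn : 0 < n)
    (a : ℕ) (ha : 2 ≤ a)
    (f : Fin n → PiLp 2 (fun l : Fin (Lnum + 1) => EuclideanSpace ℝ (Fin (q l))) → ℝ)
    (hf : ∀ i, Differentiable ℝ (f i))
    (y : Fin n → ℝ) (Cy : ℝ) (hy : ∀ i, |y i| ≤ Cy)
    (Ln : PiLp 2 (fun l : Fin (Lnum + 1) => EuclideanSpace ℝ (Fin (q l))) → ℝ)
    (hLn : ∀ Θ', Ln Θ' = (1 / (n : ℝ)) * ∑ i, |f i Θ' - y i| ^ a / (a : ℝ))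
    (heuler : ∀ i,
      ∀ Θ' : PiLp 2 (fun l : Fin (Lnum + 1) => EuclideanSpace ℝ (Fin (q l))),
      ∀ l : Fin (Lnum + 1),
        ⟪Θ' l, gradient (fun v => f i (WithLp.toLp 2 (Function.update Θ' l v))) (Θ' l)⟫ = f i Θ')
    (Θ : PiLp 2 (fun l : Fin (Lnum + 1) => EuclideanSpace ℝ (Fin (q l))))
    (l : Fin (Lnum + 1)) :
    -2 * ⟪Θ l, gradient (fun v => Ln (WithLp.toLp 2 (Function.update Θ l v))) (Θ l)⟫ ≤
      2 * ((a : ℝ) * Ln Θ) ^ (((a : ℝ) - 1) / (a : ℝ)) *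
        (Cy - ((a : ℝ) * Ln Θ) ^ ((1 : ℝ) / (a : ℝ))) := by
  have hα : 1 < (a : ℝ) := Nat.one_lt_cast.2 ha
  have hblock : ∀ i, Differentiable ℝ (fun v => f i (WithLp.toLp 2 (Function.update Θ l v))) :=
    fun i => (hf i).comp (differentiable_toLp_update 2 Θ l)
  have hLn_block : (fun v => Ln (WithLp.toLp 2 (Function.update Θ l v))) = fun v =>
      1 / (n : ℝ) * ∑ i, |f i (WithLp.toLp 2 (Function.update Θ l v)) - y i| ^ (a : ℝ) / a := by
    funext v
    simp only [hLn, Real.rpow_natCast]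
  have hmean : (a : ℝ) * Ln Θ = ∑ i, 1 / (n : ℝ) * |f i Θ - y i| ^ (a : ℝ) := by
    rw [hLn, ← mul_sum]
    simp only [Real.rpow_natCast, ← sum_div]
    field_simp
  have hweights : ∑ _i : Fin n, 1 / (n : ℝ) = 1 := by
    rw [sum_const, card_univ, Fintype.card_fin, nsmul_eq_mul,
      mul_one_div_cancel (Nat.cast_ne_zero.2 hn.ne')]
  have key := neg_sum_mul_powLossDeriv_mul_add_le univ (fun _ => 1 / (n : ℝ)) (fun i => f i Θ - y i) y
    (fun _ _ => by positivity) hweights (fun i _ => hy i) hα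
  rw [hLn_block, inner_gradient_const_mul_sum_comp univ _ (fun i _ => (hblock i).differentiableAt)
    (fun i _ => hasDerivAt_abs_sub_rpow_div hα (y i) _), hmean]
  simp only [heuler, Function.update_eq_self, WithLp.toLp_ofLp]
  simp only [sub_add_cancel] at key
  rw [mul_sum]
  linarith
end
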